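/- arXiv:2411.16612 — 2 statements merged into one kernel-verified Lean document; each statement's English description precedes it below -/
import Mathlib

section
/- Encoding atomic blocks by critical sections preserves runs: for any consistent interleaving i of a program P with atomic blocks, there exists a consistent interleaving i' of split(P) — where each access to a global g is wrapped in lock(m_g)/unlock(m_g) and each atomic block is wrapped in locks of all m_g for globals g it accesses, taken in a fixed total order — such that after erasing the inserted lock/unlock steps and the mutexes m_g from states, i' yields an interleaving whose state at every index agrees with that of i on globals, mutex owners, and local states of all threads. -/
namespace CW

/-- Thread ids are finite sequences of naturals (creation histories). -/
abbrev TID := List Nat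

/-- Actions of the core language `Lang`. -/
inductive Act (Mutex Global L V : Type) : Type where
  | lock (m : Mutex)
  | unlock (m : Mutex)
  | create (tmpl : Nat)
  | localUpd (f : L → L)
  | read (g : Global) (f : L → V → L)
  | write (g : Global) (f : L → V)
  | assert (p : L → Bool)
  | pos (c : L → Bool)
  | neg (c : L → Bool)

/-- A program: thread templates (numbered CFGs, template 0 is `main`),
    start nodes, initial local state and initial values of globals. -/
structure Prog (Node Mutex Global L V : Type) where
  edges : Nat → Node → Act Mutex Global L V → Node → Prop
  start : Nat → Node
  initLocal : L
  initGlobal : Global → V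

/-- A configuration `(L, M, G)`: thread map (template, node, local state, create counter),
    mutex ownership map, and values of globals. -/
structure Config (Node Mutex Global L V : Type) where
  threads : TID → Option (Nat × Node × L × Nat)
  mutexes : Mutex → Option TID
  globals : Global → V

variable {Node Mutex Global L V : Type}

/-- The canonical initial configuration. -/
def initConfig (P : Prog Node Mutex Global L V) : Config Node Mutex Global L V where
  threads := fun t => if t = ([] : TID) then some (0, P.start 0, P.initLocal, 0) else none
  mutexes := fun _ => none
  globals := P.initGlobal

/-- The initial-state condition: only the initial thread exists, at the start node of main
    with the initial local state, no mutex held, globals at declared initial values. -/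
def IsInitGen (startF : Nat → Node) (l0 : L) (g0 : Global → V)
    (c : Config Node Mutex Global L V) : Prop :=
  (∀ t : TID, c.threads t = if t = ([] : TID) then some (0, startF 0, l0, 0) else none) ∧
  (∀ m, c.mutexes m = none) ∧ (∀ g, c.globals g = g0 g)

def IsInit (P : Prog Node Mutex Global L V) (c : Config Node Mutex Global L V) : Prop :=
  IsInitGen P.start P.initLocal P.initGlobal c

/-- Admissibility of an action for a thread with local state `l` and create counter `cnt`. -/
def admissibleAct (c : Config Node Mutex Global L V) (t : TID) (l : L) (cnt : Nat) :
    Act Mutex Global L V → Prop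
  | .lock m => c.mutexes m = none
  | .unlock m => c.mutexes m = some t
  | .create _ => c.threads (t ++ [cnt]) = none
  | .pos p => p l = true
  | .neg p => p l = false
  | _ => True

variable [DecidableEq Mutex] [DecidableEq Global]

/-- The effect of action `a` taken by thread `t` moving to node `v`. -/
def applyAct (startF : Nat → Node) (l0 : L) (c : Config Node Mutex Global L V)
    (t : TID) (tmpl : Nat) (v : Node) (l : L) (cnt : Nat) :
    Act Mutex Global L V → Config Node Mutex Global L V
  | .lock m =>
      { threads := Function.update c.threads t (some (tmpl, v, l, cnt)),
        mutexes := Function.update c.mutexes m (some t),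
        globals := c.globals }
  | .unlock m =>
      { threads := Function.update c.threads t (some (tmpl, v, l, cnt)),
        mutexes := Function.update c.mutexes m none,
        globals := c.globals }
  | .create k =>
      { threads := Function.update
          (Function.update c.threads t (some (tmpl, v, l, cnt + 1)))
          (t ++ [cnt]) (some (k, startF k, l0, 0)),
        mutexes := c.mutexes, globals := c.globals }
  | .localUpd f =>
      { threads := Function.update c.threads t (some (tmpl, v, f l, cnt)),
        mutexes := c.mutexes, globals := c.globals }
  | .read g f =>
      { threads := Function.update c.threads t (some (tmpl, v, f l (c.globals g), cnt)),
        mutexes := c.mutexes, globals := c.globals }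
  | .write g f =>
      { threads := Function.update c.threads t (some (tmpl, v, l, cnt)),
        mutexes := c.mutexes,
        globals := Function.update c.globals g (f l) }
  | _ =>
      { threads := Function.update c.threads t (some (tmpl, v, l, cnt)),
        mutexes := c.mutexes, globals := c.globals }

/-- One consistent step of the interleaving semantics. -/
def Step (P : Prog Node Mutex Global L V) (c : Config Node Mutex Global L V) (t : TID)
    (e : Node × Act Mutex Global L V × Node) (c' : Config Node Mutex Global L V) : Prop :=
  ∃ tmpl l cnt, c.threads t = some (tmpl, e.1, l, cnt) ∧
    P.edges tmpl e.1 e.2.1 e.2.2 ∧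
    admissibleAct c t l cnt e.2.1 ∧
    c' = applyAct P.start P.initLocal c t tmpl e.2.2 l cnt e.2.1

/-- A consistent interleaving of `P`: a sequence of configurations connected by
    admissible thread-labeled steps, starting in the initial state. -/
structure Interleaving (P : Prog Node Mutex Global L V) where
  len : Nat
  states : Fin (len + 1) → Config Node Mutex Global L V
  who : Fin len → TID
  edge : Fin len → Node × Act Mutex Global L V × Node
  init : IsInit P (states 0)
  consistent : ∀ k : Fin len, Step P (states k.castSucc) (who k) (edge k) (states k.succ)

/-- The assertion at step `k` of interleaving `i` is violated. -/
def Interleaving.ViolatesAt {P : Prog Node Mutex Global L V} (i : Interleaving P)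
    (k : Fin i.len) : Prop :=
  ∃ p u v, i.edge k = (u, Act.assert p, v) ∧
    ∃ tmpl l cnt, (i.states k.castSucc).threads (i.who k) = some (tmpl, u, l, cnt) ∧ p l = false

/-- Safety w.r.t. the interleaving semantics. -/
def Safe (P : Prog Node Mutex Global L V) : Prop :=
  ∀ (i : Interleaving P) (k : Fin i.len), ¬ i.ViolatesAt k

/-- Actions of `Lang_Atomic`: base actions, and atomic blocks `atomic{a; rest}` whose
first statement `a` is the only possibly inadmissible one. -/
inductive ActA (Mutex Global L V : Type) : Type where
  | base (a : Act Mutex Global L V)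
  | atomic (a : Act Mutex Global L V) (rest : List (Act Mutex Global L V))

/-- Programs of `Lang_Atomic`. -/
structure ProgA (Node Mutex Global L V : Type) where
  edges : Nat → Node → ActA Mutex Global L V → Node → Prop
  start : Nat → Node
  initLocal : L
  initGlobal : Global → V

/-- Always-admissible statement kinds allowed inside the tail of an atomic block. -/
def Act.Simple : Act Mutex Global L V → Prop
  | .localUpd _ => True
  | .read _ _ => True
  | .write _ _ => True
  | .assert _ => True
  | _ => False

/-- Apply one action of a thread `t` (keeping it at node `v`). -/
def applyOne (startF : Nat → Node) (l0 : L) (c : Config Node Mutex Global L V)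
    (t : TID) (v : Node) (a : Act Mutex Global L V) : Config Node Mutex Global L V :=
  match c.threads t with
  | some (tmpl, _, l, cnt) => applyAct startF l0 c t tmpl v l cnt a
  | none => c

/-- Apply a sequence of actions of thread `t` in one atomic step. -/
def applyList (startF : Nat → Node) (l0 : L) (c : Config Node Mutex Global L V)
    (t : TID) (v : Node) (as_ : List (Act Mutex Global L V)) : Config Node Mutex Global L V :=
  as_.foldl (fun c a => applyOne startF l0 c t v a) c

/-- One step of the interleaving semantics of `Lang_Atomic`; an atomic block is executed
as a whole, and is admissible iff its first statement is. -/
def StepA (P : ProgA Node Mutex Global L V) (c : Config Node Mutex Global L V) (t : TID)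
    (e : Node × ActA Mutex Global L V × Node) (c' : Config Node Mutex Global L V) : Prop :=
  ∃ tmpl l cnt, c.threads t = some (tmpl, e.1, l, cnt) ∧
    P.edges tmpl e.1 e.2.1 e.2.2 ∧
    match e.2.1 with
    | .base a => admissibleAct c t l cnt a ∧
        c' = applyAct P.start P.initLocal c t tmpl e.2.2 l cnt a
    | .atomic a rest => admissibleAct c t l cnt a ∧ (∀ b ∈ rest, b.Simple) ∧
        c' = applyList P.start P.initLocal
              (applyAct P.start P.initLocal c t tmpl e.2.2 l cnt a) t e.2.2 rest

/-- A consistent interleaving of a `Lang_Atomic` program. -/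
structure InterleavingA (P : ProgA Node Mutex Global L V) where
  len : Nat
  states : Fin (len + 1) → Config Node Mutex Global L V
  who : Fin len → TID
  edge : Fin len → Node × ActA Mutex Global L V × Node
  init : IsInitGen P.start P.initLocal P.initGlobal (states 0)
  consistent : ∀ k : Fin len, StepA P (states k.castSucc) (who k) (edge k) (states k.succ)

/-- An assertion (possibly inside an atomic block) is violated at step `k`: it evaluates to
false after executing the preceding statements of the block on the preceding state. -/
def InterleavingA.ViolatesAt {P : ProgA Node Mutex Global L V} (i : InterleavingA P)
    (k : Fin i.len) : Prop :=
  ∃ tmpl l cnt,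
    (i.states k.castSucc).threads (i.who k) = some (tmpl, (i.edge k).1, l, cnt) ∧
    match (i.edge k).2.1 with
    | .base a => ∃ p, a = Act.assert p ∧ p l = false
    | .atomic a rest =>
        (∃ p, a = Act.assert p ∧ p l = false) ∨
        ∃ n p, rest[n]? = some (Act.assert p) ∧
          ∃ tmpl' nd l' cnt',
            ((applyList P.start P.initLocal
                (applyAct P.start P.initLocal (i.states k.castSucc) (i.who k) tmpl
                  (i.edge k).2.2 l cnt a)
                (i.who k) (i.edge k).2.2 (rest.take n)).threads (i.who k))
              = some (tmpl', nd, l', cnt') ∧ p l' = false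

/-- Safety of a `Lang_Atomic` program w.r.t. the interleaving semantics. -/
def SafeA (P : ProgA Node Mutex Global L V) : Prop :=
  ∀ (i : InterleavingA P) (k : Fin i.len), ¬ i.ViolatesAt k

variable {GGlobal GLoc : Type} [DecidableEq GGlobal]

/-- Ghost updates: statements over the extended state that only write ghost locals and
ghost globals (reading program and ghost state is allowed). -/
def GhostUpd : Act Mutex (Global ⊕ GGlobal) (L × GLoc) V → Prop
  | .localUpd f => ∀ p, (f p).1 = p.1
  | .read _ f => ∀ p v, (f p v).1 = p.1
  | .write g _ => ∃ gg, g = Sum.inr gg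
  | _ => False

/-- Ghost statements used to evaluate and assert invariants: ghost updates or asserts. -/
def GhostStmt (b : Act Mutex (Global ⊕ GGlobal) (L × GLoc) V) : Prop :=
  GhostUpd b ∨ ∃ p, b = Act.assert p

/-- A ghost witness `(D_g, X_g, U, I)` for `P`: initial values of fresh ghost globals,
initial ghost local state, ghost updates per edge, and location invariants per node
(given as ghost statement sequences evaluating and asserting the invariant). -/
structure Witness (P : Prog Node Mutex Global L V) (GGlobal GLoc : Type) where
  ginit : GGlobal → V
  glinit : GLoc
  upd : Nat → Node → Node → Option (List (Act Mutex (Global ⊕ GGlobal) (L × GLoc) V))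
  inv : Node → Option (List (Act Mutex (Global ⊕ GGlobal) (L × GLoc) V))

/-- Well-formedness: ghost updates only modify ghost variables; invariant code consists of
ghost statements. -/
def Witness.WF {P : Prog Node Mutex Global L V} (W : Witness P GGlobal GLoc) : Prop :=
  (∀ tmpl u v us, W.upd tmpl u v = some us → ∀ b ∈ us, GhostUpd (GLoc := GLoc) b) ∧
  (∀ u bs, W.inv u = some bs → ∀ b ∈ bs, GhostStmt (GLoc := GLoc) b)

/-- Lift a program action to the extended (ghost-instrumented) state spaces. -/
def liftAct : Act Mutex Global L V → Act Mutex (Global ⊕ GGlobal) (L × GLoc) V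
  | .lock m => .lock m
  | .unlock m => .unlock m
  | .create k => .create k
  | .localUpd f => .localUpd (fun p => (f p.1, p.2))
  | .read g f => .read (.inl g) (fun p v => (f p.1 v, p.2))
  | .write g f => .write (.inl g) (fun p => f p.1)
  | .assert p => .assert (fun q => p q.1)
  | .pos c => .pos (fun q => c q.1)
  | .neg c => .neg (fun q => c q.1)

/-- The atomic block evaluating and asserting an invariant. -/
def invAct : List (Act Mutex (Global ⊕ GGlobal) (L × GLoc) V) →
    ActA Mutex (Global ⊕ GGlobal) (L × GLoc) V
  | [] => .atomic (.localUpd id) []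
  | b :: bs => .atomic b bs

/-- `δ_W`: the instrumented action on an edge — the original action fused atomically with
the ghost updates, if any. -/
def deltaAct {P : Prog Node Mutex Global L V} (W : Witness P GGlobal GLoc)
    (tmpl : Nat) (u v : Node) (a : Act Mutex Global L V) :
    ActA Mutex (Global ⊕ GGlobal) (L × GLoc) V :=
  match W.upd tmpl u v with
  | some us => .atomic (liftAct a) us
  | none => .base (liftAct a)

/-- Source node of the instrumented edge: the new node `(u, v)` if `Ψ_W u` is defined. -/
def srcNode {P : Prog Node Mutex Global L V} (W : Witness P GGlobal GLoc)
    (u v : Node) : Node ⊕ (Node × Node) :=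
  if (W.inv u).isSome then .inr (u, v) else .inl u

/-- The witness-instrumented program `P_W`. -/
def instrument (P : Prog Node Mutex Global L V) (W : Witness P GGlobal GLoc) :
    ProgA (Node ⊕ (Node × Node)) Mutex (Global ⊕ GGlobal) (L × GLoc) V where
  edges := fun tmpl n act n' =>
    (∃ u a v, P.edges tmpl u a v ∧ n = srcNode W u v ∧
        act = deltaAct W tmpl u v a ∧ n' = .inl v) ∨
    (∃ u a v bs, P.edges tmpl u a v ∧ W.inv u = some bs ∧
        n = .inl u ∧ act = invAct bs ∧ n' = .inr (u, v))
  start := fun k => .inl (P.start k)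
  initLocal := (P.initLocal, W.glinit)
  initGlobal := Sum.elim P.initGlobal W.ginit

/-- Project an instrumented node back to the original node. -/
def projNode : Node ⊕ (Node × Node) → Node
  | .inl u => u
  | .inr p => p.1

/-- `π_P`: project a configuration of `P_W` back to a configuration of `P` (remove ghost
variables; keep program variables, mutexes and thread locations). -/
def projConfig (c : Config (Node ⊕ (Node × Node)) Mutex (Global ⊕ GGlobal) (L × GLoc) V) :
    Config Node Mutex Global L V where
  threads := fun t => (c.threads t).map (fun e => (e.1, projNode e.2.1, e.2.2.1.1, e.2.2.2))
  mutexes := c.mutexes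
  globals := fun g => c.globals (.inl g)

/-- A step of an instrumented interleaving is an inserted invariant-assertion step. -/
def IsInvStep {P : Prog Node Mutex Global L V} (W : Witness P GGlobal GLoc)
    (e : (Node ⊕ (Node × Node)) × ActA Mutex (Global ⊕ GGlobal) (L × GLoc) V ×
          (Node ⊕ (Node × Node))) : Prop :=
  ∃ u v bs, W.inv u = some bs ∧ e = (.inl u, invAct bs, .inr (u, v))

/-- Globals accessed by a base action. -/
def accessedOne : Act Mutex Global L V → List Global
  | .read g _ => [g]
  | .write g _ => [g]
  | _ => []

/-- Globals accessed by an action of `Lang_Atomic`. -/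
def accessedA : ActA Mutex Global L V → List Global
  | .base a => accessedOne a
  | .atomic a rest => accessedOne a ++ (rest.map accessedOne).flatten

/-- Lift an action to the mutex set extended with the dedicated per-global mutexes. -/
def liftMut : Act Mutex Global L V → Act (Mutex ⊕ Global) Global L V
  | .lock m => .lock (.inl m)
  | .unlock m => .unlock (.inl m)
  | .create k => .create k
  | .localUpd f => .localUpd f
  | .read g f => .read g f
  | .write g f => .write g f
  | .assert p => .assert p
  | .pos c => .pos c
  | .neg c => .neg c

variable [LinearOrder Global]

/-- The sequence of base actions replacing an action of `Lang_Atomic`: the accessed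
globals' dedicated mutexes are locked in the fixed total order, then the body is executed
statement by statement, then the mutexes are released in reverse order. -/
def splitActs (act : ActA Mutex Global L V) : List (Act (Mutex ⊕ Global) Global L V) :=
  let gs := List.insertionSort (· ≤ ·) (accessedA act).dedup
  (gs.map fun g => Act.lock (Sum.inr g)) ++
  (match act with
   | .base a => [liftMut a]
   | .atomic a rest => liftMut a :: rest.map liftMut) ++
  (gs.reverse.map fun g => Act.unlock (Sum.inr g))

/-- Intermediate nodes of the critical-section expansion of an edge `(u, _, v)`. -/
def nodeAt (u v : Node) (n k : Nat) : Node ⊕ (Node × Node × Nat) :=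
  if k = 0 then .inl u else if n ≤ k then .inl v else .inr (u, v, k)

/-- `split P`: atomic blocks (and single global accesses) are encoded as critical sections
protected by the dedicated per-global mutexes, acquired in a fixed total order. -/
def splitProg (Q : ProgA Node Mutex Global L V) :
    Prog (Node ⊕ (Node × Node × Nat)) (Mutex ⊕ Global) Global L V where
  edges := fun tmpl n b n' =>
    ∃ u act v k, Q.edges tmpl u act v ∧
      k < (splitActs act).length ∧
      n = nodeAt u v (splitActs act).length k ∧
      n' = nodeAt u v (splitActs act).length (k + 1) ∧
      (splitActs act)[k]? = some b
  start := fun k => .inl (Q.start k)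
  initLocal := Q.initLocal
  initGlobal := Q.initGlobal

/-- Agreement of a `split`-configuration with an original configuration on globals,
owners of original mutexes, and local states of all threads (`π_split`-erasure). -/
def AgreesSplit (c' : Config (Node ⊕ (Node × Node × Nat)) (Mutex ⊕ Global) Global L V)
    (c : Config Node Mutex Global L V) : Prop :=
  (∀ g, c'.globals g = c.globals g) ∧
  (∀ m : Mutex, c'.mutexes (.inl m) = c.mutexes m) ∧
  (∀ t : TID, (c'.threads t).map (fun e => e.2.2.1) = (c.threads t).map (fun e => e.2.2.1))

/-!
Every step of `i` in which thread `t` executes `atomic{a; rest}` (or a single statement `a`)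
from `c` to `d` is replayed in `split Q` by `t` alone: it locks the dedicated mutexes `m_g` of
the accessed globals in increasing order, runs `a; rest` statement by statement, and unlocks
them in reverse order. In the embedding of `c` no dedicated mutex is held, so the locks succeed;
they affect neither the admissibility of `a` nor the effect of an original statement (they
commute with the body), and the statements of `rest` are always admissible. So the replay ends
in the embedding of `d`, again with all dedicated mutexes free, and the replays of consecutive
steps concatenate to a run of `split Q` in which `θ s` marks the end of the `s`-th replay.
-/

attribute [ext] Config

theorem List.foldl_apply_comm {σ α : Type*} {f : σ → α → σ} {x : α} {ys : List α}
    (h : ∀ y ∈ ys, ∀ c, f (f c x) y = f (f c y) x) (c : σ) :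
    ys.foldl f (f c x) = f (ys.foldl f c) x := by
  induction ys generalizing c with
  | nil => rfl
  | cons y ys ih =>
    rw [List.foldl_cons, h y (by simp), ih (fun y' hy' => h y' (by simp [hy'])), List.foldl_cons]

theorem List.foldl_append_comm {σ α : Type*} {f : σ → α → σ} {xs ys : List α}
    (h : ∀ x ∈ xs, ∀ y ∈ ys, ∀ c, f (f c x) y = f (f c y) x) (c : σ) :
    (xs ++ ys).foldl f c = (ys ++ xs).foldl f c := by
  induction xs generalizing c with
  | nil => simp
  | cons x xs ih =>
    rw [List.cons_append, List.foldl_cons, ih (fun x' hx' => h x' (by simp [hx'])),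
      List.foldl_append, List.foldl_apply_comm (h x (by simp)), List.foldl_append, List.foldl_cons]

theorem List.getElem_flatten_mem_of_le {β : Type*} {bs : List (List β)} {s k : ℕ}
    (hs : s < bs.length) (hk : k < bs.flatten.length) (h₁ : (bs.take s).flatten.length ≤ k)
    (h₂ : k < (bs.take (s + 1)).flatten.length) : bs.flatten[k] ∈ bs[s] := by
  have e : bs.flatten = (bs.take s).flatten ++ (bs[s] ++ (bs.drop (s + 1)).flatten) := by
    rw [← List.flatten_cons, ← List.drop_eq_getElem_cons hs, ← List.flatten_append,
      List.take_append_drop]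
  rw [List.take_add_one, List.getElem?_eq_getElem hs, Option.toList_some, List.flatten_append,
    List.length_append, List.flatten_singleton] at h₂
  simp only [e, List.getElem_append_right h₁]
  rw [List.getElem_append_left (by omega)]
  exact List.getElem_mem _

section Runs

variable {σ α : Type*} {R : σ → α → σ → Prop}

def IsRun (R : σ → α → σ → Prop) : σ → List (α × σ) → Prop
  | _, [] => True
  | c, x :: xs => R c x.1 x.2 ∧ IsRun R x.2 xs

def endState (c : σ) (L : List (α × σ)) : σ :=
  L.foldl (fun _ x => x.2) c

@[simp] theorem endState_nil (c : σ) : endState c ([] : List (α × σ)) = c := rfl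

@[simp] theorem endState_cons (c : σ) (x : α × σ) (L : List (α × σ)) :
    endState c (x :: L) = endState x.2 L := rfl

theorem endState_append (c : σ) (L₁ L₂ : List (α × σ)) :
    endState c (L₁ ++ L₂) = endState (endState c L₁) L₂ :=
  List.foldl_append

theorem isRun_append {c : σ} {L₁ L₂ : List (α × σ)} :
    IsRun R c (L₁ ++ L₂) ↔ IsRun R c L₁ ∧ IsRun R (endState c L₁) L₂ := by
  induction L₁ generalizing c with
  | nil => simp [IsRun]
  | cons x xs ih => simp [IsRun, ih, and_assoc]

theorem IsRun.rel_getElem {c : σ} {L : List (α × σ)} (hL : IsRun R c L) {m : ℕ}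
    (hm : m < L.length) :
    R (endState c (L.take m)) L[m].1 (endState c (L.take (m + 1))) := by
  rw [← List.take_append_drop m L, isRun_append, List.drop_eq_getElem_cons hm] at hL
  rw [List.take_add_one, List.getElem?_eq_getElem hm, Option.toList_some, endState_append]
  exact hL.2.1

theorem isRun_ofFn (s : ℕ → σ) {n : ℕ} (lbl : Fin n → α)
    (h : ∀ k : Fin n, R (s k) (lbl k) (s (k + 1))) :
    IsRun R (s 0) (List.ofFn fun k => (lbl k, s (k + 1))) ∧
      endState (s 0) (List.ofFn fun k => (lbl k, s (k + 1))) = s n := by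
  induction n generalizing s with
  | zero => exact ⟨trivial, rfl⟩
  | succ n ih =>
    obtain ⟨hrun, hend⟩ := ih (fun k => s (k + 1)) (fun k => lbl k.succ) fun k => h k.succ
    rw [List.ofFn_succ]
    exact ⟨⟨h 0, hrun⟩, hend⟩

theorem exists_run_of_blocks {N : ℕ} (st : Fin (N + 1) → σ) (B : Fin N → List (α × σ))
    (hne : ∀ s, B s ≠ []) (hrun : ∀ s, IsRun R (st s.castSucc) (B s))
    (hend : ∀ s, endState (st s.castSucc) (B s) = st s.succ) :
    ∃ (L : List (α × σ)) (θ : Fin (N + 1) → ℕ), IsRun R (st 0) L ∧ StrictMono θ ∧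
      θ 0 = 0 ∧ θ (Fin.last N) = L.length ∧
      (∀ s, endState (st 0) (L.take (θ s)) = st s) ∧ (∀ x ∈ L, ∃ s, x ∈ B s) ∧
      ∀ s k (hk : k < L.length), θ s.castSucc ≤ k → k < θ s.succ → L[k] ∈ B s := by
  set bs := List.ofFn B
  have take_succ (s : ℕ) (hs : s < N) : bs.take (s + 1) = bs.take s ++ [B ⟨s, hs⟩] := by
    rw [List.take_add_one, List.getElem?_ofFn, dif_pos hs]
    rfl
  have prefix_run (s : ℕ) (hs : s ≤ N) : IsRun R (st 0) (bs.take s).flatten ∧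
      endState (st 0) (bs.take s).flatten = st ⟨s, by omega⟩ := by
    induction s with
    | zero => exact ⟨trivial, rfl⟩
    | succ s ih =>
      obtain ⟨hr, he⟩ := ih (by omega)
      rw [take_succ s hs, List.flatten_append, List.flatten_singleton, isRun_append,
        endState_append, he]
      exact ⟨⟨hr, hrun ⟨s, hs⟩⟩, hend ⟨s, hs⟩⟩
  have take_flatten (s : ℕ) : bs.flatten.take (bs.take s).flatten.length = (bs.take s).flatten :=
    (List.prefix_iff_eq_take.mp ((List.take_prefix s bs).flatten)).symm
  refine ⟨bs.flatten, fun s => (bs.take s).flatten.length, ?_, ?_, by simp, ?_, fun s => ?_, ?_,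
    fun s k hk h₁ h₂ => ?_⟩
  · simpa [List.take_of_length_le, bs] using (prefix_run N le_rfl).1
  · refine Fin.strictMono_iff_lt_succ.mpr fun s => ?_
    simp only [Fin.val_castSucc, Fin.val_succ, take_succ s s.isLt, List.flatten_append,
      List.flatten_singleton, List.length_append, lt_add_iff_pos_right]
    exact List.length_pos_iff.mpr (hne s)
  · simp [List.take_of_length_le, bs]
  · rw [take_flatten]
    exact (prefix_run s (by omega)).2
  · simp [bs, List.mem_ofFn]
  · simpa [bs] using List.getElem_flatten_mem_of_le (by simp [bs]) hk h₁ h₂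

end Runs

section Threads

variable {N M G Λ Val : Type} {c : Config N M G Λ Val} {t : TID} {tmpl cnt : ℕ} {x w : N}
  {l : Λ}

def Config.withNode (t : TID) (x : N) (c : Config N M G Λ Val) : Config N M G Λ Val :=
  { c with threads := Function.update c.threads t ((c.threads t).map fun e => (e.1, x, e.2.2)) }

@[simp] theorem Config.threads_withNode_self :
    (c.withNode t x).threads t = (c.threads t).map fun e => (e.1, x, e.2.2) := by
  simp [Config.withNode]

theorem Config.withNode_of_threads_none (h : c.threads t = none) : c.withNode t x = c := by
  cases c; simp_all [Config.withNode]

theorem Config.withNode_eq_self (h : c.threads t = some (tmpl, x, l, cnt)) :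
    c.withNode t x = c := by
  cases c; simp_all [Config.withNode]

theorem admissibleAct_withNode {a : Act M G Λ Val} :
    admissibleAct (c.withNode t x) t l cnt a ↔ admissibleAct c t l cnt a := by
  cases a <;> simp [admissibleAct, Config.withNode]

variable [DecidableEq M] [DecidableEq G] {sF : ℕ → N} {l0 : Λ}

theorem applyOne_withNode (a : Act M G Λ Val) :
    applyOne sF l0 (c.withNode t x) t w a = applyOne sF l0 c t w a := by
  cases h : c.threads t with
  | none => rw [Config.withNode_of_threads_none h]
  | some e =>
    obtain ⟨tmpl, y, l, cnt⟩ := e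
    cases a <;> simp [applyOne, applyAct, Config.withNode, h]

theorem withNode_applyOne (a : Act M G Λ Val) :
    (applyOne sF l0 c t w a).withNode t x = applyOne sF l0 c t x a := by
  cases h : c.threads t with
  | none => simp [applyOne, Config.withNode_of_threads_none, h]
  | some e =>
    obtain ⟨tmpl, y, l, cnt⟩ := e
    cases a <;> simp [applyOne, applyAct, Config.withNode, h, Function.update_comm]

theorem applyOne_eq_applyAct (h : c.threads t = some (tmpl, x, l, cnt)) (a : Act M G Λ Val) :
    applyOne sF l0 c t w a = applyAct sF l0 c t tmpl w l cnt a := by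
  simp [applyOne, h]

theorem threads_applyOne (h : c.threads t = some (tmpl, x, l, cnt)) (a : Act M G Λ Val) :
    ∃ l' cnt', (applyOne sF l0 c t w a).threads t = some (tmpl, w, l', cnt') := by
  cases a <;> simp [applyOne, applyAct, h]

theorem applyList_cons (a : Act M G Λ Val) (xs : List (Act M G Λ Val)) :
    applyList sF l0 c t w (a :: xs) = applyList sF l0 (applyOne sF l0 c t w a) t w xs := rfl

theorem applyList_append (xs ys : List (Act M G Λ Val)) :
    applyList sF l0 c t w (xs ++ ys) = applyList sF l0 (applyList sF l0 c t w xs) t w ys :=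
  List.foldl_append

theorem threads_applyList (h : c.threads t = some (tmpl, x, l, cnt)) (xs : List (Act M G Λ Val)) :
    ∃ l' cnt', (applyList sF l0 c t w xs).threads t =
      some (tmpl, if xs = [] then x else w, l', cnt') := by
  induction xs generalizing c x l cnt with
  | nil => exact ⟨l, cnt, h⟩
  | cons a xs ih =>
    obtain ⟨l', cnt', h'⟩ := threads_applyOne (sF := sF) (l0 := l0) (w := w) h a
    obtain ⟨l'', cnt'', h''⟩ := ih h'
    exact ⟨l'', cnt'', by simpa [applyList_cons] using h''⟩

-- Vacuous if the thread `t` does not exist.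
def Admissible (c : Config N M G Λ Val) (t : TID) (a : Act M G Λ Val) : Prop :=
  ∀ e ∈ c.threads t, admissibleAct c t e.2.2.1 e.2.2.2 a

def SeqAdmissible (sF : ℕ → N) (l0 : Λ) (t : TID) (w : N) :
    Config N M G Λ Val → List (Act M G Λ Val) → Prop
  | _, [] => True
  | c, a :: xs => Admissible c t a ∧ SeqAdmissible sF l0 t w (applyOne sF l0 c t w a) xs

theorem seqAdmissible_append {xs ys : List (Act M G Λ Val)} :
    SeqAdmissible sF l0 t w c (xs ++ ys) ↔
      SeqAdmissible sF l0 t w c xs ∧ SeqAdmissible sF l0 t w (applyList sF l0 c t w xs) ys := by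
  induction xs generalizing c with
  | nil => simp [SeqAdmissible, applyList]
  | cons a xs ih => simp [SeqAdmissible, ih, applyList_cons, and_assoc]

theorem SeqAdmissible.admissible_getElem {xs : List (Act M G Λ Val)}
    (h : SeqAdmissible sF l0 t w c xs) {k : ℕ} (hk : k < xs.length) :
    Admissible (applyList sF l0 c t w (xs.take k)) t xs[k] := by
  rw [← List.take_append_drop k xs, seqAdmissible_append, List.drop_eq_getElem_cons hk] at h
  exact h.2.1

def LabeledStep (P : Prog N M G Λ Val) (c : Config N M G Λ Val)
    (x : TID × (N × Act M G Λ Val × N)) (c' : Config N M G Λ Val) : Prop :=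
  Step P c x.1 x.2 c'

theorem step_withNode {P : Prog N M G Λ Val} {y z : N} {a : Act M G Λ Val}
    (h : c.threads t = some (tmpl, x, l, cnt)) (hadm : Admissible c t a)
    (hedge : P.edges tmpl y a z) :
    Step P (c.withNode t y) t (y, a, z) (applyOne P.start P.initLocal c t z a) := by
  refine ⟨tmpl, l, cnt, by simp [h], hedge, admissibleAct_withNode.mpr (hadm _ h), ?_⟩
  have hy : (c.withNode t y).threads t = some (tmpl, y, l, cnt) := by simp [h]
  rw [← applyOne_withNode (x := y), applyOne_eq_applyAct hy]

theorem exists_run_of_seqAdmissible {P : Prog N M G Λ Val} {as : List (Act M G Λ Val)}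
    (nd : ℕ → N) (h : c.threads t = some (tmpl, nd 0, l, cnt))
    (hedge : ∀ k (hk : k < as.length), P.edges tmpl (nd k) as[k] (nd (k + 1)))
    (hadm : SeqAdmissible P.start P.initLocal t w c as) :
    ∃ B, IsRun (LabeledStep P) c B ∧
      endState c B = (applyList P.start P.initLocal c t w as).withNode t (nd as.length) ∧
      B.length = as.length ∧ ∀ x ∈ B, x.1.1 = t ∧ x.1.2.2.1 ∈ as := by
  -- `applyList` moves `t` to `w` at every statement; `withNode` restores the node `nd k`,
  -- which is harmless because the effect of a statement never depends on the acting thread's node.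
  let st (k : ℕ) := (applyList P.start P.initLocal c t w (as.take k)).withNode t (nd k)
  have hstep (k : Fin as.length) :
      LabeledStep P (st k) (t, nd k, as[k], nd (k + 1)) (st (k + 1)) := by
    obtain ⟨l', cnt', hk⟩ := threads_applyList (sF := P.start) (l0 := P.initLocal) (w := w) h
      (as.take k)
    have htake : as.take (k + 1) = as.take k ++ [as[k]] := by
      rw [List.take_add_one, List.getElem?_eq_getElem k.isLt]
      rfl
    have hnext : st (k + 1) = applyOne P.start P.initLocal
        (applyList P.start P.initLocal c t w (as.take k)) t (nd (k + 1)) as[k] := by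
      simp only [st, htake, applyList_append]
      exact withNode_applyOne _
    rw [LabeledStep, hnext]
    exact step_withNode hk (hadm.admissible_getElem k.isLt) (hedge k k.isLt)
  obtain ⟨hrun, hend⟩ := isRun_ofFn st _ hstep
  have hst0 : st 0 = c := Config.withNode_eq_self h
  rw [hst0] at hrun hend
  refine ⟨_, hrun, by rw [hend]; simp only [st, List.take_length], by simp, fun x hx => ?_⟩
  obtain ⟨k, rfl⟩ := List.mem_ofFn.mp hx
  exact ⟨rfl, List.getElem_mem k.isLt⟩

def Interleaving.ofRun (P : Prog N M G Λ Val) {c : Config N M G Λ Val} (hc : IsInit P c)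
    {L : List ((TID × (N × Act M G Λ Val × N)) × Config N M G Λ Val)}
    (hL : IsRun (LabeledStep P) c L) : Interleaving P where
  len := L.length
  states k := endState c (L.take k)
  who k := L[k].1.1
  edge k := L[k].1.2
  init := hc
  consistent k := hL.rel_getElem k.isLt

end Threads

section Mutexes

variable {N M G Λ Val : Type} [DecidableEq M] [DecidableEq G] {sF : ℕ → N} {l0 : Λ}
  {c : Config N M G Λ Val} {t : TID} {tmpl cnt : ℕ} {x w : N} {l : Λ}

theorem mutexes_applyOne_lock (h : c.threads t = some (tmpl, x, l, cnt)) (m m' : M) :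
    (applyOne sF l0 c t w (.lock m')).mutexes m = if m = m' then some t else c.mutexes m := by
  simp [applyOne, applyAct, h, Function.update_apply]

theorem mutexes_applyOne_lock_of_ne {m m' : M} (hm : m ≠ m') :
    (applyOne sF l0 c t w (.lock m')).mutexes m = c.mutexes m := by
  cases h : c.threads t <;> simp [applyOne, applyAct, h, hm]

theorem mutexes_applyOne_unlock_of_ne {m m' : M} (hm : m ≠ m') :
    (applyOne sF l0 c t w (.unlock m')).mutexes m = c.mutexes m := by
  cases h : c.threads t <;> simp [applyOne, applyAct, h, hm]

theorem mutexes_applyList_locks (h : c.threads t = some (tmpl, x, l, cnt)) (ms : List M) (m : M) :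
    (applyList sF l0 c t w (ms.map .lock)).mutexes m =
      if m ∈ ms then some t else c.mutexes m := by
  induction ms generalizing c x l cnt with
  | nil => simp [applyList]
  | cons m' ms ih =>
    obtain ⟨l', cnt', h'⟩ := threads_applyOne (sF := sF) (l0 := l0) (w := w) h (.lock m')
    rw [List.map_cons, applyList_cons, ih h', mutexes_applyOne_lock h]
    by_cases hm : m ∈ ms <;> by_cases hm' : m = m' <;> simp [hm, hm']

theorem seqAdmissible_locks {ms : List M} (hnd : ms.Nodup)
    (hfree : ∀ m ∈ ms, c.mutexes m = none) :
    SeqAdmissible sF l0 t w c (ms.map .lock) := by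
  induction ms generalizing c with
  | nil => trivial
  | cons m ms ih =>
    rw [List.nodup_cons] at hnd
    refine ⟨fun _ _ => hfree m (by simp), ih hnd.2 fun m' hm' => ?_⟩
    rw [mutexes_applyOne_lock_of_ne (by rintro rfl; exact hnd.1 hm')]
    exact hfree m' (by simp [hm'])

theorem seqAdmissible_unlocks {ms : List M} (hnd : ms.Nodup)
    (hheld : ∀ m ∈ ms, c.mutexes m = some t) :
    SeqAdmissible sF l0 t w c (ms.map .unlock) := by
  induction ms generalizing c with
  | nil => trivial
  | cons m ms ih =>
    rw [List.nodup_cons] at hnd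
    refine ⟨fun _ _ => hheld m (by simp), ih hnd.2 fun m' hm' => ?_⟩
    rw [mutexes_applyOne_unlock_of_ne (by rintro rfl; exact hnd.1 hm')]
    exact hheld m' (by simp [hm'])

theorem applyOne_unlock_applyOne_lock (h : c.threads t = some (tmpl, w, l, cnt)) {m : M}
    (hm : c.mutexes m = none) :
    applyOne sF l0 (applyOne sF l0 c t w (.lock m)) t w (.unlock m) = c := by
  cases c
  simp_all [applyOne, applyAct, Function.update_eq_self_iff]

theorem applyList_locks_append_unlocks (h : c.threads t = some (tmpl, w, l, cnt)) {ms : List M}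
    (hnd : ms.Nodup) (hfree : ∀ m ∈ ms, c.mutexes m = none) :
    applyList sF l0 c t w (ms.map .lock ++ ms.reverse.map .unlock) = c := by
  induction ms generalizing c l cnt with
  | nil => rfl
  | cons m ms ih =>
    rw [List.nodup_cons] at hnd
    obtain ⟨l', cnt', h'⟩ := threads_applyOne (sF := sF) (l0 := l0) (w := w) h (.lock m)
    have hmid := ih h' hnd.2 fun m' hm' => by
      rw [mutexes_applyOne_lock_of_ne (by rintro rfl; exact hnd.1 hm')]
      exact hfree m' (by simp [hm'])
    simp only [List.map_cons, List.reverse_cons, List.map_append]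
    rw [List.cons_append, applyList_cons, ← List.append_assoc, applyList_append, hmid]
    exact applyOne_unlock_applyOne_lock h (hfree m (by simp))

end Mutexes

section Lift

variable {N X M G Λ Val : Type} {t : TID} {tmpl cnt : ℕ} {l : Λ}

@[simps]
def liftConfig (c : Config N M G Λ Val) : Config (N ⊕ X) (M ⊕ G) G Λ Val where
  threads t := (c.threads t).map fun e => (e.1, .inl e.2.1, e.2.2)
  mutexes := Sum.elim c.mutexes fun _ => none
  globals := c.globals

theorem admissibleAct_liftMut (c : Config N M G Λ Val) (a : Act M G Λ Val) :
    admissibleAct (liftConfig c : Config (N ⊕ X) _ _ _ _) t l cnt (liftMut a) ↔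
      admissibleAct c t l cnt a := by
  cases a <;> simp [admissibleAct, liftMut]

theorem isInitGen_liftConfig {sF : ℕ → N} {l0 : Λ} {g0 : G → Val} {c : Config N M G Λ Val}
    (h : IsInitGen sF l0 g0 c) :
    IsInitGen (fun k => .inl (sF k)) l0 g0
      (liftConfig c : Config (N ⊕ X) _ _ _ _) := by
  obtain ⟨hthreads, hmutexes, hglobals⟩ := h
  refine ⟨fun t => ?_, ?_, hglobals⟩
  · by_cases ht : t = [] <;> simp [hthreads, ht]
  · rintro (m | g)
    · exact hmutexes m
    · rfl

theorem agreesSplit_liftConfig (c : Config N M G Λ Val) : AgreesSplit (liftConfig c) c :=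
  ⟨fun _ => rfl, fun _ => rfl, fun t => by rw [liftConfig_threads, Option.map_map]; rfl⟩

variable [DecidableEq M] [DecidableEq G] {sF : ℕ → N} {l0 : Λ}

theorem liftConfig_applyAct (c : Config N M G Λ Val) (v : N) (a : Act M G Λ Val) :
    (liftConfig (applyAct sF l0 c t tmpl v l cnt a) : Config (N ⊕ X) _ _ _ _) =
      applyAct (fun k => .inl (sF k)) l0 (liftConfig c) t tmpl (.inl v) l cnt (liftMut a) := by
  cases a <;> ext1 <;> funext y <;>
    simp [applyAct, liftMut, Function.update_apply] <;> split_ifs <;> simp_all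

theorem liftConfig_applyOne (c : Config N M G Λ Val) (v : N) (a : Act M G Λ Val) :
    (liftConfig (applyOne sF l0 c t v a) : Config (N ⊕ X) _ _ _ _) =
      applyOne (fun k => .inl (sF k)) l0 (liftConfig c) t (.inl v) (liftMut a) := by
  cases h : c.threads t with
  | none => simp [applyOne, h]
  | some e => simp [applyOne, h, liftConfig_applyAct]

theorem liftConfig_applyList (c : Config N M G Λ Val) (v : N) (as : List (Act M G Λ Val)) :
    (liftConfig (applyList sF l0 c t v as) : Config (N ⊕ X) _ _ _ _) =
      applyList (fun k => .inl (sF k)) l0 (liftConfig c) t (.inl v) (as.map liftMut) := by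
  induction as generalizing c with
  | nil => rfl
  | cons a as ih => rw [applyList_cons, ih, liftConfig_applyOne]; rfl

end Lift

section DedicatedMutexes

variable {N M G Λ Val : Type} {c : Config N (M ⊕ G) G Λ Val} {t : TID}

theorem admissible_liftMut_of_simple {a : Act M G Λ Val} (ha : a.Simple) :
    Admissible c t (liftMut a) := by
  cases a <;> first | exact fun _ _ => trivial | exact (ha : False).elim

variable [DecidableEq M] [DecidableEq G] {sF : ℕ → N} {l0 : Λ} {w : N}

theorem admissible_liftMut_applyOne_lock (g : G) (a : Act M G Λ Val) :
    Admissible (applyOne sF l0 c t w (.lock (.inr g))) t (liftMut a) ↔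
      Admissible c t (liftMut a) := by
  cases h : c.threads t with
  | none => simp [applyOne, h]
  | some e =>
    obtain ⟨tmpl, y, l, cnt⟩ := e
    cases a <;> simp [Admissible, admissibleAct, applyOne, applyAct, liftMut, h]

theorem admissible_liftMut_applyList_locks (gs : List G) (a : Act M G Λ Val) :
    Admissible (applyList sF l0 c t w ((gs.map .inr).map .lock)) t (liftMut a) ↔
      Admissible c t (liftMut a) := by
  induction gs generalizing c with
  | nil => rfl
  | cons g gs ih =>
    rw [List.map_cons, List.map_cons, applyList_cons, ih, admissible_liftMut_applyOne_lock]

theorem applyOne_lock_inr_liftMut_comm (c : Config N (M ⊕ G) G Λ Val) (g : G)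
    (a : Act M G Λ Val) :
    applyOne sF l0 (applyOne sF l0 c t w (.lock (.inr g))) t w (liftMut a) =
      applyOne sF l0 (applyOne sF l0 c t w (liftMut a)) t w (.lock (.inr g)) := by
  cases h : c.threads t with
  | none => simp [applyOne, h]
  | some e =>
    obtain ⟨tmpl, y, l, cnt⟩ := e
    cases a <;> ext1 <;> funext z <;>
      simp [applyOne, applyAct, liftMut, h, Function.update_apply] <;> (try split_ifs) <;> simp_all

theorem applyList_locks_append_liftMut_comm (gs : List G) (as : List (Act M G Λ Val)) :
    applyList sF l0 c t w ((gs.map .inr).map .lock ++ as.map liftMut) =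
      applyList sF l0 c t w (as.map liftMut ++ (gs.map .inr).map .lock) := by
  refine List.foldl_append_comm (fun x hx y hy c => ?_) c
  rw [List.map_map] at hx
  obtain ⟨g, -, rfl⟩ := List.mem_map.mp hx
  obtain ⟨a, -, rfl⟩ := List.mem_map.mp hy
  exact applyOne_lock_inr_liftMut_comm c g a

theorem mutexes_applyList_liftMut (as : List (Act M G Λ Val)) (g : G) :
    (applyList sF l0 c t w (as.map liftMut)).mutexes (.inr g) = c.mutexes (.inr g) := by
  induction as generalizing c with
  | nil => rfl
  | cons a as ih =>
    rw [List.map_cons, applyList_cons, ih]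
    cases h : c.threads t <;> cases a <;> simp [applyOne, applyAct, liftMut, h]

theorem seqAdmissible_map_liftMut {as : List (Act M G Λ Val)} (has : ∀ a ∈ as, a.Simple) :
    SeqAdmissible sF l0 t w c (as.map liftMut) := by
  induction as generalizing c with
  | nil => trivial
  | cons a as ih =>
    exact ⟨admissible_liftMut_of_simple (has a (by simp)), ih fun b hb => has b (by simp [hb])⟩

end DedicatedMutexes

section CriticalSection

variable {N M G Λ Val : Type}

def criticalSection (ms : List M) (body : List (Act M G Λ Val)) : List (Act M G Λ Val) :=
  ms.map .lock ++ body ++ ms.reverse.map .unlock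

variable [DecidableEq M] [DecidableEq G] {sF : ℕ → N} {l0 : Λ}
  {c : Config N (M ⊕ G) G Λ Val} {t : TID} {tmpl cnt : ℕ} {x w : N} {l : Λ} {gs : List G}
  {a : Act M G Λ Val} {rest : List (Act M G Λ Val)}

theorem applyList_criticalSection (h : c.threads t = some (tmpl, x, l, cnt)) (hnd : gs.Nodup)
    (hfree : ∀ g ∈ gs, c.mutexes (.inr g) = none) :
    applyList sF l0 c t w (criticalSection (gs.map .inr) ((a :: rest).map liftMut)) =
      applyList sF l0 c t w ((a :: rest).map liftMut) := by
  obtain ⟨l', cnt', hbody⟩ := threads_applyList (sF := sF) (l0 := l0) (w := w) h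
    ((a :: rest).map liftMut)
  rw [if_neg (by simp)] at hbody
  rw [criticalSection, applyList_append, applyList_locks_append_liftMut_comm, applyList_append,
    ← applyList_append, applyList_locks_append_unlocks hbody (hnd.map Sum.inr_injective)]
  intro m hm
  obtain ⟨g, hg, rfl⟩ := List.mem_map.mp hm
  rw [mutexes_applyList_liftMut, hfree g hg]

theorem seqAdmissible_criticalSection (h : c.threads t = some (tmpl, x, l, cnt)) (hnd : gs.Nodup)
    (hfree : ∀ g ∈ gs, c.mutexes (.inr g) = none) (ha : Admissible c t (liftMut a))
    (hrest : ∀ b ∈ rest, b.Simple) :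
    SeqAdmissible sF l0 t w c (criticalSection (gs.map .inr) ((a :: rest).map liftMut)) := by
  obtain ⟨l', cnt', hbody⟩ := threads_applyList (sF := sF) (l0 := l0) (w := w) h
    ((a :: rest).map liftMut)
  have hfree' : ∀ m ∈ gs.map .inr, c.mutexes m = none := by
    intro m hm
    obtain ⟨g, hg, rfl⟩ := List.mem_map.mp hm
    exact hfree g hg
  rw [criticalSection, seqAdmissible_append, seqAdmissible_append]
  refine ⟨⟨seqAdmissible_locks (hnd.map Sum.inr_injective) hfree',
    (admissible_liftMut_applyList_locks gs a).mpr ha, seqAdmissible_map_liftMut hrest⟩, ?_⟩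
  rw [applyList_locks_append_liftMut_comm, applyList_append]
  refine seqAdmissible_unlocks (List.nodup_reverse.mpr (hnd.map Sum.inr_injective)) fun m hm => ?_
  rw [mutexes_applyList_locks hbody, if_pos (List.mem_reverse.mp hm)]

end CriticalSection

section SortedAccessed

variable {M G Λ Val : Type} [DecidableEq G] [LinearOrder G]

def sortedAccessed (act : ActA M G Λ Val) : List G :=
  (accessedA act).dedup.insertionSort (· ≤ ·)

theorem nodup_sortedAccessed (act : ActA M G Λ Val) : (sortedAccessed act).Nodup :=
  (List.perm_insertionSort _ _).nodup_iff.mpr (List.nodup_dedup _)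

end SortedAccessed

section Split

variable {Q : ProgA Node Mutex Global L V}

theorem StepA.exists_straightLine {c d : Config Node Mutex Global L V} {t : TID} {u v : Node}
    {act : ActA Mutex Global L V} (h : StepA Q c t (u, act, v) d) :
    ∃ tmpl l cnt a rest, c.threads t = some (tmpl, u, l, cnt) ∧ Q.edges tmpl u act v ∧
      admissibleAct c t l cnt a ∧ (∀ b ∈ rest, b.Simple) ∧
      d = applyList Q.start Q.initLocal c t v (a :: rest) ∧
      splitActs act =
        criticalSection ((sortedAccessed act).map .inr) ((a :: rest).map liftMut) := by
  obtain ⟨tmpl, l, cnt, hc, hQ, hact⟩ := h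
  have hsplit (a : Act Mutex Global L V) (rest : List (Act Mutex Global L V))
      (hact : act = .base a ∧ rest = [] ∨ act = .atomic a rest) :
      splitActs act =
        criticalSection ((sortedAccessed act).map .inr) ((a :: rest).map liftMut) := by
    rcases hact with ⟨rfl, rfl⟩ | rfl <;>
      simp [splitActs, sortedAccessed, criticalSection, List.map_reverse, Function.comp_def]
  cases act with
  | base a =>
    obtain ⟨hadm, rfl⟩ := hact
    exact ⟨tmpl, l, cnt, a, [], hc, hQ, hadm, by simp, (applyOne_eq_applyAct hc a).symm,
      hsplit a [] (.inl ⟨rfl, rfl⟩)⟩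
  | atomic a rest =>
    obtain ⟨hadm, hsimple, rfl⟩ := hact
    exact ⟨tmpl, l, cnt, a, rest, hc, hQ, hadm, hsimple,
      by rw [applyList_cons, applyOne_eq_applyAct hc], hsplit a rest (.inr rfl)⟩

theorem StepA.exists_split_run {c d : Config Node Mutex Global L V} {t : TID}
    {e : Node × ActA Mutex Global L V × Node} (h : StepA Q c t e d) :
    ∃ B, B ≠ [] ∧ IsRun (LabeledStep (splitProg Q)) (liftConfig c) B ∧
      endState (liftConfig c) B = liftConfig d ∧
      ∀ x ∈ B, x.1.1 = t ∧ ∃ j : ℕ, (splitActs e.2.1)[j]? = some x.1.2.2.1 := by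
  obtain ⟨u, act, v⟩ := e
  obtain ⟨tmpl, l, cnt, a, rest, hc, hQ, hadm, hsimple, rfl, hsplit⟩ := h.exists_straightLine
  have hn : (splitActs act).length ≠ 0 := by simp [hsplit, criticalSection]
  set C : Config (Node ⊕ (Node × Node × ℕ)) (Mutex ⊕ Global) Global L V := liftConfig c
  have hC : C.threads t = some (tmpl, nodeAt u v (splitActs act).length 0, l, cnt) := by
    simp [C, hc, nodeAt]
  have hadm' : Admissible C t (liftMut a) := by
    intro e he
    rw [hC, Option.mem_some_iff] at he
    subst he
    exact (admissibleAct_liftMut c a).mpr hadm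
  have hlast : applyList (splitProg Q).start (splitProg Q).initLocal C t (.inl v) (splitActs act) =
      liftConfig (applyList Q.start Q.initLocal c t v (a :: rest)) := by
    rw [hsplit, applyList_criticalSection hC (nodup_sortedAccessed act) (fun _ _ => rfl),
      liftConfig_applyList]
    rfl
  obtain ⟨B, hrun, hend, hlen, hlabel⟩ := exists_run_of_seqAdmissible (P := splitProg Q)
    (w := .inl v) (nodeAt u v (splitActs act).length) hC
    (fun k hk => ⟨u, act, v, k, hQ, hk, rfl, rfl, List.getElem?_eq_getElem hk⟩)
    (hsplit ▸ seqAdmissible_criticalSection hC (nodup_sortedAccessed act) (fun _ _ => rfl) hadm'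
      hsimple)
  obtain ⟨l', cnt', hd⟩ := threads_applyList (sF := Q.start) (l0 := Q.initLocal) (w := v) hc
    (a :: rest)
  refine ⟨B, by simpa [← List.length_pos_iff, hlen] using Nat.pos_of_ne_zero hn, hrun, ?_,
    fun x hx => ⟨(hlabel x hx).1, List.mem_iff_getElem?.mp (hlabel x hx).2⟩⟩
  rw [hend, hlast]
  exact Config.withNode_eq_self (tmpl := tmpl) (l := l') (cnt := cnt') (by simp [hd, nodeAt, hn])

end Split

/-- Encoding atomic blocks by critical sections preserves runs: for any
consistent interleaving `i` of a `Lang_Atomic` program `Q`, there is a consistent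
interleaving `i'` of `split Q` such that, after erasing the inserted lock/unlock steps of
the dedicated mutexes `m_g` and erasing those mutexes from states, `i'` yields an
interleaving whose state at every index agrees with that of `i` on globals, mutex owners,
and local states of all threads. -/
theorem split_preserves_runs (Q : ProgA Node Mutex Global L V) (i : InterleavingA Q) :
    ∃ (i' : Interleaving (splitProg Q)) (θ : Fin (i.len + 1) → Fin (i'.len + 1)),
      StrictMono θ ∧ θ 0 = 0 ∧ θ (Fin.last i.len) = Fin.last i'.len ∧
      (∀ s : Fin (i.len + 1), AgreesSplit (i'.states (θ s)) (i.states s)) ∧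
      (∀ k' : Fin i'.len,
        (∃ g : Global, (i'.edge k').2.1 = Act.lock (Sum.inr g) ∨
            (i'.edge k').2.1 = Act.unlock (Sum.inr g)) ∨
        (∃ s : Fin i.len, i'.who k' = i.who s ∧
            ∃ j : Nat, (splitActs (i.edge s).2.1)[j]? = some (i'.edge k').2.1)) ∧
      (∀ (s : Fin i.len) (k' : Fin i'.len),
        (θ s.castSucc).val ≤ k'.val → k'.val < (θ s.succ).val → i'.who k' = i.who s) := by
  choose B hne hrun hend hlabel using fun s => (i.consistent s).exists_split_run
  obtain ⟨L, θ, hL, hθ, hθ0, hθlast, hstates, hmem, hblock⟩ :=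
    exists_run_of_blocks (fun s => liftConfig (i.states s)) B hne hrun hend
  have hθlt (s) : θ s < L.length + 1 :=
    Nat.lt_succ_of_le (hθlast ▸ hθ.monotone (Fin.le_last s))
  refine ⟨Interleaving.ofRun (splitProg Q) (isInitGen_liftConfig i.init) hL,
    fun s => ⟨θ s, hθlt s⟩, fun a b hab => hθ hab, Fin.ext hθ0, Fin.ext hθlast,
    fun s => ?_, fun k => ?_, fun s k h₁ h₂ => (hlabel s _ (hblock s k k.isLt h₁ h₂)).1⟩
  · show AgreesSplit (endState _ (L.take (θ s))) _
    rw [hstates]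
    exact agreesSplit_liftConfig _
  · obtain ⟨s, hs⟩ := hmem _ (L.getElem_mem k.isLt)
    exact .inr ⟨s, hlabel s _ hs⟩
end CW
end

section
/- The per-thread projection used in the coincidence construction is well-defined: given a consistent interleaving i and a thread t, fusing each pair of consecutive states (target of one t-step, source of the next t-step) is legitimate because these states agree on t's control location and local state, yielding a unique sequence of local configurations of t. -/
namespace CW

variable {Node Mutex Global L V : Type}

variable [DecidableEq Mutex] [DecidableEq Global]

/-! Between two consecutive steps of `t` only other threads move. A step of `t'` rewrites
only the slot of `t'` and, for `create`, the slot of the new child, which admissibility forces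
to be empty. Hence `t`'s entry, which exists after its own step, is carried unchanged from the
target of one `t`-step to the source of the next. -/

theorem applyAct_threads_of_ne (startF : Nat → Node) (l0 : L)
    (c : Config Node Mutex Global L V) {t t' : TID} (tmpl : Nat) (v : Node) (l : L) (cnt : Nat)
    {a : Act Mutex Global L V} (hadm : admissibleAct c t' l cnt a) (hne : t ≠ t')
    (ht : c.threads t ≠ none) :
    (applyAct startF l0 c t' tmpl v l cnt a).threads t = c.threads t := by
  cases a with
  | create k =>
    have hfresh : t ≠ t' ++ [cnt] := by
      rintro rfl
      exact ht hadm
    simp only [applyAct, Function.update_of_ne hne, Function.update_of_ne hfresh]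
  | _ => simp only [applyAct, Function.update_of_ne hne]

theorem Step.threads_of_ne {P : Prog Node Mutex Global L V}
    {c c' : Config Node Mutex Global L V} {t t' : TID} {e : Node × Act Mutex Global L V × Node}
    (h : Step P c t' e c') (hne : t' ≠ t) (ht : c.threads t ≠ none) :
    c'.threads t = c.threads t := by
  obtain ⟨tmpl, l, cnt, -, -, hadm, rfl⟩ := h
  exact applyAct_threads_of_ne _ _ _ _ _ _ _ hadm (Ne.symm hne) ht

theorem applyAct_threads_self_ne_none (startF : Nat → Node) (l0 : L)
    (c : Config Node Mutex Global L V) (t : TID) (tmpl : Nat) (v : Node) (l : L) (cnt : Nat)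
    (a : Act Mutex Global L V) :
    (applyAct startF l0 c t tmpl v l cnt a).threads t ≠ none := by
  cases a <;> simp [applyAct]

theorem Step.threads_self_ne_none {P : Prog Node Mutex Global L V}
    {c c' : Config Node Mutex Global L V} {t : TID} {e : Node × Act Mutex Global L V × Node}
    (h : Step P c t e c') : c'.threads t ≠ none := by
  obtain ⟨tmpl, l, cnt, -, -, -, rfl⟩ := h
  exact applyAct_threads_self_ne_none _ _ _ _ _ _ _ _ _

theorem Interleaving.threads_eq_of_who_ne {P : Prog Node Mutex Global L V} (i : Interleaving P)
    {t : TID} {a b : Fin (i.len + 1)} (hab : a ≤ b)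
    (hwho : ∀ k : Fin i.len, a ≤ k.castSucc → k.succ ≤ b → i.who k ≠ t)
    (ht : (i.states a).threads t ≠ none) :
    (i.states b).threads t = (i.states a).threads t := by
  induction b using Fin.induction with
  | zero => rw [nonpos_iff_eq_zero.mp hab]
  | succ k ih =>
    rcases hab.eq_or_lt with rfl | hlt
    · rfl
    have hak : a ≤ k.castSucc := Fin.le_castSucc_iff.mpr hlt
    have hprev := ih hak fun k' h₁ h₂ => hwho k' h₁ (h₂.trans (Fin.castSucc_le_succ k))
    rw [← hprev] at ht ⊢
    exact (i.consistent k).threads_of_ne (hwho k hak le_rfl) ht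

theorem projection_fusion_well_defined_general (P : Prog Node Mutex Global L V)
    (i : Interleaving P) (t : TID) (j j' : Fin i.len)
    (hj : i.who j = t) (hlt : j < j')
    (hconsec : ∀ k : Fin i.len, j < k → k < j' → i.who k ≠ t) :
    (i.states j.succ).threads t = (i.states j'.castSucc).threads t ∧
    ∀ (tmpl tmpl' : Nat) (u u' : Node) (l l' : L) (cnt cnt' : Nat),
      (i.states j.succ).threads t = some (tmpl, u, l, cnt) →
      (i.states j'.castSucc).threads t = some (tmpl', u', l', cnt') →
      u = u' ∧ l = l' := by
  have hexists : (i.states j.succ).threads t ≠ none := hj ▸ (i.consistent j).threads_self_ne_none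
  have hfused : (i.states j.succ).threads t = (i.states j'.castSucc).threads t :=
    (i.threads_eq_of_who_ne (Fin.succ_le_castSucc_iff.mpr hlt)
      (fun k hjk hkj' => hconsec k (Fin.succ_le_castSucc_iff.mp hjk)
        (Fin.succ_le_castSucc_iff.mp hkj')) hexists).symm
  refine ⟨hfused, fun tmpl tmpl' u u' l l' cnt cnt' hu hu' => ?_⟩
  rw [hfused, hu', Option.some.injEq, Prod.mk.injEq, Prod.mk.injEq, Prod.mk.injEq] at hu
  exact ⟨hu.2.1.symm, hu.2.2.1.symm⟩

/-- The per-thread projection used in the coincidence construction is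
well-defined: given a consistent interleaving `i` and a thread `t`, fusing each pair of
consecutive states (target of one `t`-step, source of the next `t`-step) is legitimate
because these states agree on `t`'s control location and local state, yielding a unique
sequence of local configurations of `t`. -/
theorem projection_fusion_well_defined (P : Prog Node Mutex Global L V)
    (i : Interleaving P) (t : TID) (j j' : Fin i.len)
    (hj : i.who j = t) (hj' : i.who j' = t) (hlt : j < j')
    (hconsec : ∀ k : Fin i.len, j < k → k < j' → i.who k ≠ t) :
    (i.states j.succ).threads t = (i.states j'.castSucc).threads t ∧
    ∀ (tmpl tmpl' : Nat) (u u' : Node) (l l' : L) (cnt cnt' : Nat),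
      (i.states j.succ).threads t = some (tmpl, u, l, cnt) →
      (i.states j'.castSucc).threads t = some (tmpl', u', l', cnt') →
      u = u' ∧ l = l' :=
  projection_fusion_well_defined_general P i t j j' hj hlt hconsec
end CW
end
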